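/- Let A : ℝ² → ℂ be Lebesgue integrable and vanish outside the closed unit disk, let Â(k) = ∫_{ℝ²} A(x) exp(−i ⟨k, x⟩) dx be its Fourier transform, and for k ≥ 0 and q ∈ ℤ let a(k; q) = (1/(2π)) ∫₀^{2π} Â(k cos ψ, k sin ψ) exp(−i q ψ) dψ denote its Fourier–Bessel coefficients. Let δ ≥ 0, ω ∈ ℝ and set δ⃗ = (δ cos ω, δ sin ω). Then for every k ≥ 0 and q ∈ ℤ, the q-th angular Fourier coefficient of the translated Fourier transform satisfies (1/(2π)) ∫₀^{2π} exp(−i ⟨δ⃗, (k cos ψ, k sin ψ)⟩) Â(k cos ψ, k sin ψ) exp(−i q ψ) dψ = Σ_{ℓ ∈ ℤ} J_ℓ(δ k) exp(−i ℓ (ω + π/2)) a(k; q − ℓ), where the series over ℓ converges absolutely. That is, translation by δ⃗ acts on the Fourier–Bessel coefficients as a discrete convolution with the kernel f(δ⃗, k; ℓ) = J_ℓ(δk) e^{−iℓ(ω + π/2)}. -/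

import Mathlib

open scoped InnerProductSpace
open Complex Real MeasureTheory intervalIntegral Function


noncomputable def besselJ (n : ℤ) (z : ℝ) : ℂ :=
  (1 / (2 * Real.pi)) *
    ∫ α in (0:ℝ)..(2 * Real.pi), Complex.exp (Complex.I * ((z * Real.sin α - n * α : ℝ) : ℂ))

noncomputable def gfun (x : ℝ) (α : ℝ) : ℂ := Complex.exp (Complex.I * (x * Real.sin α))

lemma gfun_periodic (x : ℝ) : Function.Periodic (gfun x) (2 * Real.pi) := by
  intro t; simp [gfun, Real.sin_add_two_pi]

instance : Fact (0 < 2 * Real.pi) := ⟨by positivity⟩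

lemma besselJ_eq_fourierCoeff (n : ℤ) (x : ℝ) :
    besselJ n x = fourierCoeff ((gfun_periodic x).lift) n := by
  rw [fourierCoeff_eq_intervalIntegral _ n 0]
  rw [besselJ]
  rw [zero_add]
  simp only [smul_eq_mul]
  congr 1
  · norm_num
  refine intervalIntegral.integral_congr fun α hα => ?_
  rw [Function.Periodic.lift_coe, fourier_coe_apply]
  simp only [gfun, smul_eq_mul]
  rw [← Complex.exp_add]
  congr 1
  push_cast
  have h2 : (2 * Real.pi : ℂ) ≠ 0 := by
    simp [Real.pi_ne_zero, Complex.ofReal_ne_zero]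
  field_simp
  ring

noncomputable def g1 (x : ℝ) (α : ℝ) : ℂ := (Complex.I * x * Real.cos α) * gfun x α
noncomputable def g2 (x : ℝ) (α : ℝ) : ℂ :=
  (Complex.I * x * (-Real.sin α) + (Complex.I * x * Real.cos α)^2) * gfun x α

lemma hasDerivAt_gfun (x α : ℝ) : HasDerivAt (gfun x) (g1 x α) α := by
  have h1 : HasDerivAt (fun α : ℝ => ((Real.sin α : ℝ) : ℂ)) (Real.cos α) α :=
    (Real.hasDerivAt_sin α).ofReal_comp
  have h2 : HasDerivAt (fun α : ℝ => Complex.I * (x * ((Real.sin α : ℝ) : ℂ)))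
      (Complex.I * (x * (Real.cos α))) α := by
    simpa using ((h1.const_mul (x:ℂ)).const_mul Complex.I)
  have H := h2.cexp
  refine H.congr_deriv ?_
  simp only [g1, gfun]
  ring

lemma hasDerivAt_g1 (x α : ℝ) : HasDerivAt (g1 x) (g2 x α) α := by
  have hc : HasDerivAt (fun α : ℝ => (Complex.I * x * ((Real.cos α : ℝ) : ℂ)))
      (Complex.I * x * (-Real.sin α)) α := by
    have := (Real.hasDerivAt_cos α).ofReal_comp.const_mul (Complex.I * (x:ℂ))
    refine this.congr_deriv ?_
    push_cast; ring
  have := hc.mul (hasDerivAt_gfun x α)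
  refine this.congr_deriv ?_
  simp only [g1, g2, gfun]
  ring

lemma besselJ_eq_fourierCoeffOn (n : ℤ) (x : ℝ) :
    besselJ n x = fourierCoeffOn Real.two_pi_pos (gfun x) n := by
  rw [fourierCoeffOn_eq_integral, besselJ]
  simp only [smul_eq_mul]
  congr 1
  · norm_num
  refine intervalIntegral.integral_congr fun α hα => ?_
  rw [fourier_coe_apply]
  simp only [gfun, smul_eq_mul]
  rw [← Complex.exp_add]
  congr 1
  push_cast
  have h2 : (2 * Real.pi : ℂ) ≠ 0 := by
    simp [Real.pi_ne_zero, Complex.ofReal_ne_zero]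
  field_simp
  ring

lemma norm_fourierCoeffOn_le {f : ℝ → ℂ} (n : ℤ) (C : ℝ)
    (hf : ∀ α, ‖f α‖ ≤ C) (hint : IntervalIntegrable f volume 0 (2 * Real.pi)) :
    ‖fourierCoeffOn Real.two_pi_pos f n‖ ≤ C := by
  have hC : 0 ≤ C := le_trans (norm_nonneg _) (hf 0)
  rw [fourierCoeffOn_eq_integral]
  simp only [zero_add, sub_zero]
  rw [norm_smul]
  have h1 : ‖(1 / (2 * Real.pi) : ℝ)‖ = 1 / (2 * Real.pi) := by
    rw [Real.norm_eq_abs, abs_of_pos (by positivity)]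
  rw [h1]
  have h2 : ‖∫ α in (0:ℝ)..(2 * Real.pi), fourier (-n) (α : AddCircle (2 * Real.pi - 0)) • f α‖
      ≤ C * |2 * Real.pi - 0| := by
    apply intervalIntegral.norm_integral_le_of_norm_le_const
    intro α hα
    rw [norm_smul]
    have : ‖fourier (-n) (α : AddCircle (2 * Real.pi - 0))‖ = 1 := Circle.norm_coe _
    rw [this, one_mul]; exact hf α
  calc (1 / (2 * Real.pi)) * ‖_‖ ≤ (1 / (2 * Real.pi)) * (C * |2 * Real.pi - 0|) := by
        apply mul_le_mul_of_nonneg_left h2 (by positivity)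
    _ = C := by
        rw [sub_zero, abs_of_pos (by positivity)]
        field_simp

lemma continuous_gfun (x : ℝ) : Continuous (gfun x) := by
  unfold gfun; fun_prop

lemma continuous_g1 (x : ℝ) : Continuous (g1 x) := by
  unfold g1 gfun; fun_prop

lemma continuous_g2 (x : ℝ) : Continuous (g2 x) := by
  unfold g2 gfun; fun_prop

lemma norm_gfun (x α : ℝ) : ‖gfun x α‖ = 1 := by
  simp [gfun, Complex.norm_exp]

lemma norm_g2_le (x α : ℝ) : ‖g2 x α‖ ≤ |x| + x^2 := by
  rw [g2, norm_mul, norm_gfun, mul_one]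
  calc ‖Complex.I * x * (-Real.sin α) + (Complex.I * x * Real.cos α)^2‖
      ≤ ‖Complex.I * x * (-Real.sin α)‖ + ‖(Complex.I * x * Real.cos α)^2‖ := norm_add_le _ _
    _ ≤ |x| + x^2 := by
        rw [norm_pow]
        simp only [norm_mul, Complex.norm_I, one_mul, norm_neg, Complex.norm_real,
          Real.norm_eq_abs]
        have h1 : |x| * |Real.sin α| ≤ |x| * 1 :=
          mul_le_mul_of_nonneg_left (Real.abs_sin_le_one α) (abs_nonneg x)
        have h2 : (|x| * |Real.cos α|)^2 ≤ (|x| * 1)^2 := by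
          apply pow_le_pow_left₀ (by positivity)
          exact mul_le_mul_of_nonneg_left (Real.abs_cos_le_one α) (abs_nonneg x)
        calc |x| * |Real.sin α| + (|x| * |Real.cos α|)^2 ≤ |x| * 1 + (|x| * 1)^2 :=
              add_le_add h1 h2
          _ = |x| + x^2 := by simp [sq_abs]


lemma besselJ_norm_le (x : ℝ) {n : ℤ} (hn : n ≠ 0) :
    ‖besselJ n x‖ ≤ (|x| + x^2) / (n:ℝ)^2 := by
  have hn' : ((n:ℂ)) ≠ 0 := Int.cast_ne_zero.mpr hn
  have hπ : ((Real.pi : ℂ)) ≠ 0 := Complex.ofReal_ne_zero.mpr Real.pi_ne_zero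
  have e1 : fourierCoeffOn Real.two_pi_pos (gfun x) n =
      (1 / (Complex.I * n)) * fourierCoeffOn Real.two_pi_pos (g1 x) n := by
    rw [fourierCoeffOn_of_hasDerivAt Real.two_pi_pos hn
      (fun α _ => hasDerivAt_gfun x α) ((continuous_g1 x).intervalIntegrable 0 (2*Real.pi))]
    have hp : gfun x (2 * Real.pi) = gfun x 0 := by simp [gfun, Real.sin_two_pi]
    rw [hp, sub_self, mul_zero, zero_sub]
    push_cast
    field_simp
    ring
  have e2 : fourierCoeffOn Real.two_pi_pos (g1 x) n =
      (1 / (Complex.I * n)) * fourierCoeffOn Real.two_pi_pos (g2 x) n := by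
    rw [fourierCoeffOn_of_hasDerivAt Real.two_pi_pos hn
      (fun α _ => hasDerivAt_g1 x α) ((continuous_g2 x).intervalIntegrable 0 (2*Real.pi))]
    have hp : g1 x (2 * Real.pi) = g1 x 0 := by
      simp [g1, gfun, Real.sin_two_pi, Real.cos_two_pi]
    rw [hp, sub_self, mul_zero, zero_sub]
    push_cast
    field_simp
    ring
  rw [besselJ_eq_fourierCoeffOn, e1, e2, ← mul_assoc, norm_mul]
  have hIn : ‖(Complex.I * (n:ℂ))‖ = |(n:ℝ)| := by
    rw [norm_mul, Complex.norm_I, one_mul]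
    simp
  have hnorm : ‖(1 / (Complex.I * n) : ℂ) * (1 / (Complex.I * n))‖ = 1 / (n:ℝ)^2 := by
    rw [norm_mul, norm_div, norm_one, hIn, div_mul_div_comm, one_mul, ← abs_mul,
      abs_mul_self, ← sq]
  rw [hnorm, div_mul_eq_mul_div, one_mul]
  gcongr
  exact norm_fourierCoeffOn_le n _ (norm_g2_le x) ((continuous_g2 x).intervalIntegrable 0 (2*Real.pi))

lemma summable_norm_besselJ (x : ℝ) : Summable fun n : ℤ => ‖besselJ n x‖ := by
  apply Summable.of_norm_bounded_eventually (g := fun n : ℤ => (|x| + x^2) * (1 / (n:ℝ)^2))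
  · exact (summable_one_div_int_pow.mpr one_lt_two).mul_left _
  · filter_upwards [(Set.finite_singleton (0:ℤ)).eventually_cofinite_notMem] with n hn
    rw [norm_norm, mul_one_div]
    exact besselJ_norm_le x (by simpa using hn)

lemma summable_besselJ (x : ℝ) : Summable fun n : ℤ => besselJ n x :=
  Summable.of_norm (summable_norm_besselJ x)

lemma jacobiAnger (x θ : ℝ) :
    HasSum (fun ℓ : ℤ => besselJ ℓ x * Complex.exp (Complex.I * ℓ * θ))
      (Complex.exp (Complex.I * (x * Real.sin θ))) := by
  have hcont : Continuous ((gfun_periodic x).lift) := by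
    apply Continuous.quotient_liftOn'
    exact continuous_gfun x
  set F : C(AddCircle (2 * Real.pi), ℂ) := ⟨(gfun_periodic x).lift, hcont⟩ with hF
  have hsummable : Summable (fourierCoeff (F : AddCircle (2 * Real.pi) → ℂ)) := by
    apply Summable.of_norm
    have : ∀ n : ℤ, ‖fourierCoeff (F : AddCircle (2 * Real.pi) → ℂ) n‖ = ‖besselJ n x‖ := by
      intro n; rw [besselJ_eq_fourierCoeff]; rfl
    simpa only [this] using summable_norm_besselJ x
  have H := has_pointwise_sum_fourier_series_of_summable hsummable (θ : AddCircle (2 * Real.pi))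
  have hFθ : F ((θ : ℝ) : AddCircle (2 * Real.pi)) = gfun x θ := by
    show (gfun_periodic x).lift ((θ : ℝ) : AddCircle (2 * Real.pi)) = gfun x θ
    exact Function.Periodic.lift_coe _ θ
  rw [hFθ] at H
  refine H.congr_fun fun ℓ => ?_
  rw [besselJ_eq_fourierCoeff]
  have : fourierCoeff (F : AddCircle (2 * Real.pi) → ℂ) ℓ
      = fourierCoeff ((gfun_periodic x).lift) ℓ := rfl
  rw [← this, smul_eq_mul]
  congr 1
  rw [fourier_coe_apply]
  congr 1
  have h2 : (2 * Real.pi : ℂ) ≠ 0 := by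
    simp [Real.pi_ne_zero, Complex.ofReal_ne_zero]
  field_simp
  push_cast
  ring

/-- The point `(a, b)` of the Euclidean plane. -/
noncomputable def e2 (a b : ℝ) : EuclideanSpace ℝ (Fin 2) := WithLp.toLp 2 ![a, b]

lemma inner_e2 (a b c d : ℝ) : ⟪e2 a b, e2 c d⟫_ℝ = a * c + b * d := by
  simp [e2, PiLp.inner_apply, Fin.sum_univ_two]
  ring

lemma continuous_e2map (k : ℝ) :
    Continuous (fun ψ : ℝ => e2 (k * Real.cos ψ) (k * Real.sin ψ)) := by
  apply Continuous.comp (PiLp.continuous_toLp 2 (fun _ : Fin 2 => ℝ))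
  refine continuous_pi fun i => ?_
  fin_cases i
  · show Continuous fun ψ : ℝ => k * Real.cos ψ
    fun_prop
  · show Continuous fun ψ : ℝ => k * Real.sin ψ
    fun_prop

lemma ahat_cont (A : EuclideanSpace ℝ (Fin 2) → ℂ) (hA : MeasureTheory.Integrable A) :
    Continuous (fun v : EuclideanSpace ℝ (Fin 2) =>
      ∫ x : EuclideanSpace ℝ (Fin 2),
        A x * Complex.exp (-Complex.I * ((⟪v, x⟫_ℝ : ℝ) : ℂ))) := by
  apply MeasureTheory.continuous_of_dominated (bound := fun x => ‖A x‖)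
  · intro v
    apply MeasureTheory.AEStronglyMeasurable.mul hA.aestronglyMeasurable
    apply Continuous.aestronglyMeasurable
    exact Complex.continuous_exp.comp (by
      exact (continuous_const.mul (Complex.continuous_ofReal.comp
        (continuous_const.inner continuous_id))))
  · intro v
    filter_upwards with x
    rw [norm_mul]
    have : ‖Complex.exp (-Complex.I * ((⟪v, x⟫_ℝ : ℝ) : ℂ))‖ = 1 := by
      rw [Complex.norm_exp]
      simp
    rw [this, mul_one]
  · exact hA.norm
  · filter_upwards with x
    exact continuous_const.mul (Complex.continuous_exp.comp
      (continuous_const.mul (Complex.continuous_ofReal.comp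
        (continuous_id.inner continuous_const))))


/-- For an integrable image `A` supported in the closed unit disk, translation
by `δ⃗ = (δ cos ω, δ sin ω)` acts on the Fourier–Bessel coefficients
`a(k; q)` of `A` as a discrete convolution with the kernel
`f(δ⃗, k; ℓ) = J_ℓ(δk) e^{−iℓ(ω + π/2)}`, the series converging absolutely. -/
theorem translation_acts_as_convolution
    (A : EuclideanSpace ℝ (Fin 2) → ℂ) (hA : MeasureTheory.Integrable A)
    (hsupp : ∀ x : EuclideanSpace ℝ (Fin 2), 1 < ‖x‖ → A x = 0)
    (Ahat : EuclideanSpace ℝ (Fin 2) → ℂ)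
    (hAhat : ∀ k : EuclideanSpace ℝ (Fin 2),
      Ahat k = ∫ x : EuclideanSpace ℝ (Fin 2),
        A x * Complex.exp (-Complex.I * ((⟪k, x⟫_ℝ : ℝ) : ℂ)))
    (a : ℝ → ℤ → ℂ)
    (ha : ∀ (k : ℝ) (q : ℤ),
      a k q = (1 / (2 * Real.pi) : ℂ) *
        ∫ ψ in (0:ℝ)..(2 * Real.pi),
          Ahat (e2 (k * Real.cos ψ) (k * Real.sin ψ)) *
            Complex.exp (-Complex.I * ((q : ℂ) * (ψ : ℂ))))
    (δ ω : ℝ) (hδ : 0 ≤ δ) (k : ℝ) (hk : 0 ≤ k) (q : ℤ) :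
    Summable (fun ℓ : ℤ =>
      ‖besselJ ℓ (δ * k) *
        Complex.exp (-Complex.I * ((ℓ : ℂ) * ((ω + Real.pi / 2 : ℝ) : ℂ))) * a k (q - ℓ)‖) ∧
    (1 / (2 * Real.pi) : ℂ) *
      ∫ ψ in (0:ℝ)..(2 * Real.pi),
        Complex.exp (-Complex.I *
            ((⟪e2 (δ * Real.cos ω) (δ * Real.sin ω),
              e2 (k * Real.cos ψ) (k * Real.sin ψ)⟫_ℝ : ℝ) : ℂ)) *
          Ahat (e2 (k * Real.cos ψ) (k * Real.sin ψ)) *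
          Complex.exp (-Complex.I * ((q : ℂ) * (ψ : ℂ)))
    = ∑' ℓ : ℤ, besselJ ℓ (δ * k) *
        Complex.exp (-Complex.I * ((ℓ : ℂ) * ((ω + Real.pi / 2 : ℝ) : ℂ))) * a k (q - ℓ) := by
  classical
  set x : ℝ := δ * k with hx
  set M : ℝ := ∫ y, ‖A y‖ with hM
  have hπc : ((2 * Real.pi : ℂ)) ≠ 0 := by
    simp [Real.pi_ne_zero, Complex.ofReal_ne_zero]
  have hAc : Continuous Ahat := by
    have := ahat_cont A hA
    have heq : Ahat = fun v => ∫ y : EuclideanSpace ℝ (Fin 2),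
        A y * Complex.exp (-Complex.I * ((⟪v, y⟫_ℝ : ℝ) : ℂ)) := funext hAhat
    rw [heq]; exact this
  have hAb : ∀ v, ‖Ahat v‖ ≤ M := by
    intro v
    rw [hAhat v]
    calc ‖∫ y, A y * Complex.exp (-Complex.I * ((⟪v, y⟫_ℝ : ℝ) : ℂ))‖
        ≤ ∫ y, ‖A y * Complex.exp (-Complex.I * ((⟪v, y⟫_ℝ : ℝ) : ℂ))‖ :=
          MeasureTheory.norm_integral_le_integral_norm _
      _ = M := by
          rw [hM]
          apply MeasureTheory.integral_congr_ae
          filter_upwards with y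
          rw [norm_mul]
          have : ‖Complex.exp (-Complex.I * ((⟪v, y⟫_ℝ : ℝ) : ℂ))‖ = 1 := by
            rw [Complex.norm_exp]; simp
          rw [this, mul_one]
  have hM0 : 0 ≤ M := MeasureTheory.integral_nonneg fun y => norm_nonneg _
  set Φ : ℝ → ℂ := fun ψ => Ahat (e2 (k * Real.cos ψ) (k * Real.sin ψ)) with hΦ
  have hΦc : Continuous Φ := hAc.comp (continuous_e2map k)
  have hΦb : ∀ ψ, ‖Φ ψ‖ ≤ M := fun ψ => hAb _
  have hab : ∀ m : ℤ, ‖a k m‖ ≤ M := by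
    intro m
    rw [ha k m, norm_mul]
    have h1 : ‖(1 / (2 * Real.pi) : ℂ)‖ = 1 / (2 * Real.pi) := by
      rw [norm_div, norm_one, norm_mul, Complex.norm_real, Real.norm_eq_abs,
        abs_of_pos Real.pi_pos]
      norm_num
    rw [h1]
    have h2 : ‖∫ ψ in (0:ℝ)..(2 * Real.pi), Φ ψ * Complex.exp (-Complex.I * ((m:ℂ) * ψ))‖
        ≤ M * |2 * Real.pi - 0| := by
      apply intervalIntegral.norm_integral_le_of_norm_le_const
      intro ψ hψ
      rw [norm_mul]
      have : ‖Complex.exp (-Complex.I * ((m:ℂ) * ψ))‖ = 1 := by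
        rw [Complex.norm_exp]; simp
      rw [this, mul_one]; exact hΦb ψ
    calc (1 / (2 * Real.pi)) * ‖_‖ ≤ (1 / (2 * Real.pi)) * (M * |2 * Real.pi - 0|) :=
          mul_le_mul_of_nonneg_left h2 (by positivity)
      _ = M := by
          rw [sub_zero, abs_of_pos Real.two_pi_pos]
          field_simp
  -- Part 1: summability
  have habs : ∀ ℓ : ℤ, ‖besselJ ℓ x *
      Complex.exp (-Complex.I * ((ℓ : ℂ) * ((ω + Real.pi / 2 : ℝ) : ℂ))) * a k (q - ℓ)‖
      ≤ ‖besselJ ℓ x‖ * M := by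
    intro ℓ
    rw [norm_mul, norm_mul]
    have h1 : ‖Complex.exp (-Complex.I * ((ℓ : ℂ) * ((ω + Real.pi / 2 : ℝ) : ℂ)))‖ = 1 := by
      rw [Complex.norm_exp]
      simp
    rw [h1, mul_one]
    exact mul_le_mul_of_nonneg_left (hab (q - ℓ)) (norm_nonneg _)
  have hsum1 : Summable (fun ℓ : ℤ =>
      ‖besselJ ℓ x *
        Complex.exp (-Complex.I * ((ℓ : ℂ) * ((ω + Real.pi / 2 : ℝ) : ℂ))) * a k (q - ℓ)‖) := by
    apply Summable.of_nonneg_of_le (fun ℓ => norm_nonneg _) habs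
    exact (summable_norm_besselJ x).mul_right M
  refine ⟨hsum1, ?_⟩
  -- the summands
  set G : ℤ → ℝ → ℂ := fun ℓ ψ =>
    besselJ ℓ x * Complex.exp (Complex.I * ℓ * ((ψ - (ω + Real.pi / 2) : ℝ) : ℂ)) *
      (Φ ψ * Complex.exp (-Complex.I * ((q : ℂ) * (ψ : ℂ)))) with hG
  set Lint : ℝ → ℂ := fun ψ =>
    Complex.exp (-Complex.I *
        ((⟪e2 (δ * Real.cos ω) (δ * Real.sin ω),
          e2 (k * Real.cos ψ) (k * Real.sin ψ)⟫_ℝ : ℝ) : ℂ)) *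
      Φ ψ * Complex.exp (-Complex.I * ((q : ℂ) * (ψ : ℂ))) with hLint
  have hpt : ∀ ψ : ℝ, HasSum (fun ℓ : ℤ => G ℓ ψ) (Lint ψ) := by
    intro ψ
    have H := (jacobiAnger x (ψ - (ω + Real.pi / 2))).mul_right
      (Φ ψ * Complex.exp (-Complex.I * ((q : ℂ) * (ψ : ℂ))))
    have hval : Lint ψ =
        Complex.exp (Complex.I * ((x : ℂ) * ((Real.sin (ψ - (ω + Real.pi / 2)) : ℝ) : ℂ))) *
          (Φ ψ * Complex.exp (-Complex.I * ((q : ℂ) * (ψ : ℂ)))) := by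
      simp only [hLint]
      have hinner : ⟪e2 (δ * Real.cos ω) (δ * Real.sin ω),
          e2 (k * Real.cos ψ) (k * Real.sin ψ)⟫_ℝ = x * Real.cos (ψ - ω) := by
        rw [inner_e2, Real.cos_sub, hx]; ring
      rw [hinner]
      have hsin : Real.sin (ψ - (ω + Real.pi / 2)) = -Real.cos (ψ - ω) := by
        rw [show ψ - (ω + Real.pi / 2) = (ψ - ω) - Real.pi / 2 by ring,
          Real.sin_sub_pi_div_two]
      have hexp : Complex.exp (-Complex.I * ((x * Real.cos (ψ - ω) : ℝ) : ℂ))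
          = Complex.exp (Complex.I * ((x : ℂ) * ((Real.sin (ψ - (ω + Real.pi / 2)) : ℝ) : ℂ))) := by
        rw [hsin]
        congr 1
        push_cast
        ring
      rw [hexp]
      ring
    rw [hval]
    exact H
  -- integrability and summability of integrals
  have hGc : ∀ ℓ : ℤ, Continuous (G ℓ) := by
    intro ℓ
    apply Continuous.mul
    · apply Continuous.mul continuous_const
      exact Complex.continuous_exp.comp (continuous_const.mul
        (Complex.continuous_ofReal.comp (by fun_prop)))
    · exact hΦc.mul (Complex.continuous_exp.comp (continuous_const.mul
        (continuous_const.mul Complex.continuous_ofReal)))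
  have hGb : ∀ ℓ : ℤ, ∀ ψ : ℝ, ‖G ℓ ψ‖ ≤ ‖besselJ ℓ x‖ * M := by
    intro ℓ ψ
    rw [hG]
    simp only [norm_mul]
    have h1 : ‖Complex.exp (Complex.I * ℓ * ((ψ - (ω + Real.pi / 2) : ℝ) : ℂ))‖ = 1 := by
      rw [Complex.norm_exp]
      simp [mul_assoc]
    have h2 : ‖Complex.exp (-Complex.I * ((q : ℂ) * (ψ : ℂ)))‖ = 1 := by
      rw [Complex.norm_exp]; simp
    rw [h1, h2, mul_one, mul_one]
    exact mul_le_mul_of_nonneg_left (hΦb ψ) (norm_nonneg _)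
  have hGint : ∀ ℓ : ℤ, MeasureTheory.Integrable (G ℓ)
      (MeasureTheory.volume.restrict (Set.Ioc 0 (2 * Real.pi))) :=
    fun ℓ => (hGc ℓ).integrableOn_Ioc
  have hGnorm_sum : Summable (fun ℓ : ℤ =>
      ∫ ψ in Set.Ioc (0:ℝ) (2 * Real.pi), ‖G ℓ ψ‖) := by
    apply Summable.of_nonneg_of_le
      (fun ℓ => MeasureTheory.integral_nonneg fun ψ => norm_nonneg _)
      (fun ℓ => ?_)
      (((summable_norm_besselJ x).mul_right (M * (2 * Real.pi))))
    calc ∫ ψ in Set.Ioc (0:ℝ) (2 * Real.pi), ‖G ℓ ψ‖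
        ≤ ∫ _ψ in Set.Ioc (0:ℝ) (2 * Real.pi), ‖besselJ ℓ x‖ * M := by
          apply MeasureTheory.integral_mono_of_nonneg
          · filter_upwards with ψ; exact norm_nonneg _
          · exact MeasureTheory.integrable_const _
          · filter_upwards with ψ; exact hGb ℓ ψ
      _ = ‖besselJ ℓ x‖ * (M * (2 * Real.pi)) := by
          rw [MeasureTheory.setIntegral_const, smul_eq_mul, Real.volume_real_Ioc]
          rw [max_eq_left (by rw [sub_zero]; positivity)]
          ring
  have hkey := MeasureTheory.hasSum_integral_of_summable_integral_norm hGint hGnorm_sum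
  -- compute each integral
  have hGval : ∀ ℓ : ℤ, (∫ ψ in Set.Ioc (0:ℝ) (2 * Real.pi), G ℓ ψ)
      = (2 * Real.pi : ℂ) * (besselJ ℓ x *
          Complex.exp (-Complex.I * ((ℓ : ℂ) * ((ω + Real.pi / 2 : ℝ) : ℂ))) * a k (q - ℓ)) := by
    intro ℓ
    have hGrw : ∀ ψ : ℝ, G ℓ ψ =
        (besselJ ℓ x * Complex.exp (-Complex.I * ((ℓ : ℂ) * ((ω + Real.pi / 2 : ℝ) : ℂ)))) *
          (Φ ψ * Complex.exp (-Complex.I * (((q - ℓ : ℤ) : ℂ) * (ψ : ℂ)))) := by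
      intro ψ
      rw [hG]
      have e : Complex.exp (Complex.I * ℓ * ((ψ - (ω + Real.pi / 2) : ℝ) : ℂ)) *
          Complex.exp (-Complex.I * ((q : ℂ) * (ψ : ℂ)))
          = Complex.exp (-Complex.I * ((ℓ : ℂ) * ((ω + Real.pi / 2 : ℝ) : ℂ))) *
            Complex.exp (-Complex.I * (((q - ℓ : ℤ) : ℂ) * (ψ : ℂ))) := by
        rw [← Complex.exp_add, ← Complex.exp_add]
        congr 1
        push_cast
        ring
      linear_combination (besselJ ℓ x * Φ ψ) * e
    rw [MeasureTheory.integral_congr_ae (Filter.Eventually.of_forall fun ψ => hGrw ψ)]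
    rw [MeasureTheory.integral_const_mul]
    have hset : (∫ ψ in Set.Ioc (0:ℝ) (2 * Real.pi),
        Φ ψ * Complex.exp (-Complex.I * (((q - ℓ : ℤ) : ℂ) * (ψ : ℂ))))
        = ∫ ψ in (0:ℝ)..(2 * Real.pi),
            Φ ψ * Complex.exp (-Complex.I * (((q - ℓ : ℤ) : ℂ) * (ψ : ℂ))) := by
      rw [intervalIntegral.integral_of_le Real.two_pi_pos.le]
    rw [hset]
    have := ha k (q - ℓ)
    rw [hΦ]
    rw [show (∫ ψ in (0:ℝ)..(2 * Real.pi),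
        Ahat (e2 (k * Real.cos ψ) (k * Real.sin ψ)) *
          Complex.exp (-Complex.I * (((q - ℓ : ℤ) : ℂ) * (ψ : ℂ))))
        = (2 * Real.pi : ℂ) * a k (q - ℓ) by
      rw [this]
      rw [← mul_assoc]
      rw [mul_one_div, div_self hπc, one_mul]]
    ring
  -- put it together
  have htsum_eq : ∀ ψ : ℝ, (∑' ℓ : ℤ, G ℓ ψ) = Lint ψ := fun ψ => (hpt ψ).tsum_eq
  have hint_eq : (∫ ψ in Set.Ioc (0:ℝ) (2 * Real.pi), ∑' ℓ : ℤ, G ℓ ψ)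
      = ∫ ψ in (0:ℝ)..(2 * Real.pi), Lint ψ := by
    rw [intervalIntegral.integral_of_le Real.two_pi_pos.le]
    exact MeasureTheory.integral_congr_ae (Filter.Eventually.of_forall fun ψ => htsum_eq ψ)
  have hfinal : HasSum (fun ℓ : ℤ => (2 * Real.pi : ℂ) * (besselJ ℓ x *
      Complex.exp (-Complex.I * ((ℓ : ℂ) * ((ω + Real.pi / 2 : ℝ) : ℂ))) * a k (q - ℓ)))
      (∫ ψ in (0:ℝ)..(2 * Real.pi), Lint ψ) := by
    rw [← hint_eq]
    exact hkey.congr_fun fun ℓ => (hGval ℓ).symm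
  have hfinal2 := (hfinal.div_const (2 * Real.pi : ℂ))
  have : ∀ ℓ : ℤ, besselJ ℓ x *
          Complex.exp (-Complex.I * ((ℓ : ℂ) * ((ω + Real.pi / 2 : ℝ) : ℂ))) * a k (q - ℓ)
      = (2 * Real.pi : ℂ) * (besselJ ℓ x *
          Complex.exp (-Complex.I * ((ℓ : ℂ) * ((ω + Real.pi / 2 : ℝ) : ℂ))) * a k (q - ℓ)) /
        (2 * Real.pi : ℂ) := by
    intro ℓ
    exact (mul_div_cancel_left₀ _ hπc).symm
  rw [(hfinal2.congr_fun this).tsum_eq]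
  rw [one_div, inv_mul_eq_div]
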